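/- Let R be a finite commutative ring. Then every finite set of ideals of R satisfies (R1') if and only if R is isomorphic to a finite direct product of local rings each of whose ideal lattice is totally ordered. -/

import Mathlib

/-!
(⇐) In a ring whose ideals form a chain, a union of finitely many ideals is the largest of them,
and a single translate of that one already has as many points. Condition (R1') passes to
products, by comparing the two unions fibre by fibre over one coordinate and then over the
other, and to surjective images, because every fibre of a surjection has `|ker f|` points.

(⇒) A finite ring is the product of its localizations at its maximal ideals, and each factor
inherits (R1'). If a local factor had ideals `I ⊈ J ⊈ I`, pick `x ∈ I \ J` and `y ∈ J \ I`.
Modulo `𝔪x + 𝔪y` the principal ideals `(x)`, `(y)`, `(x + y)` meet pairwise in `0`, and then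
`(x) ∪ (x + (y)) ∪ (x + y)` is strictly smaller than `(x) ∪ (y) ∪ (x + y)`.
-/

universe u v

def SatisfiesR1' (R : Type*) [CommRing R] : Prop :=
  ∀ (r : ℕ) (I : Fin r → Ideal R) (a : Fin r → R),
    (⋃ j, ((I j : Set R))).ncard ≤ (⋃ j, (a j + ·) '' (I j : Set R)).ncard

open Set

theorem SatisfiesR1'.ncard_iUnion_le {R ι : Type*} [CommRing R] [Finite ι] (h : SatisfiesR1' R)
    (I : ι → Ideal R) (a : ι → R) :
    (⋃ i, (I i : Set R)).ncard ≤ (⋃ i, (a i + ·) '' (I i : Set R)).ncard := by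
  obtain ⟨n, ⟨e⟩⟩ := Finite.exists_equiv_fin ι
  rw [← e.symm.surjective.iUnion_comp, ← e.symm.surjective.iUnion_comp]
  exact h n (I ∘ e.symm) (a ∘ e.symm)

theorem AddMonoidHom.ncard_preimage_of_surjective {G H : Type*} [AddGroup G] [AddGroup H]
    (f : G →+ H) (hf : Function.Surjective f) (s : Set H) :
    (f ⁻¹' s).ncard = Nat.card f.ker * s.ncard := by
  let g := Function.surjInv hf
  have hfg : ∀ y, f (g y) = y := Function.surjInv_eq hf
  let e : (f ⁻¹' s) ≃ f.ker × s :=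
    { toFun x := (⟨x - g (f x), by simp [hfg]⟩, ⟨f x, x.2⟩)
      invFun p := ⟨p.1 + g p.2, by simp [hfg, (AddMonoidHom.mem_ker).1 p.1.2]⟩
      left_inv x := by simp
      right_inv p := by
        have hp : f p.1 = 0 := p.1.2
        ext <;> simp [hfg, hp] }
  rw [← Nat.card_coe_set_eq, ← Nat.card_coe_set_eq, Nat.card_congr e, Nat.card_prod]

theorem SatisfiesR1'.of_surjective {R S : Type*} [CommRing R] [CommRing S] [Finite R]
    (h : SatisfiesR1' R) (f : R →+* S) (hf : Function.Surjective f) : SatisfiesR1' S := by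
  intro r I a
  choose b hb using fun j => hf (a j)
  have hunion : f ⁻¹' (⋃ j, (I j : Set S)) = ⋃ j, ((I j).comap f : Set R) := by
    simp [preimage_iUnion]
  have htrans : f ⁻¹' (⋃ j, (a j + ·) '' (I j : Set S)) =
      ⋃ j, (b j + ·) '' ((I j).comap f : Set R) := by
    simp only [preimage_iUnion, image_add_left, ← preimage_comp, Ideal.coe_comap]
    congr! with j
    ext x
    simp [hb]
  have hcard : ∀ s : Set S, (f ⁻¹' s).ncard = Nat.card (f : R →+ S).ker * s.ncard :=
    (f : R →+ S).ncard_preimage_of_surjective hf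
  have hker : 0 < Nat.card (f : R →+ S).ker := Nat.card_pos
  have := h.ncard_iUnion_le (fun j => (I j).comap f) b
  rwa [← hunion, ← htrans, hcard, hcard, Nat.mul_le_mul_left_iff hker] at this

theorem satisfiesR1'_of_le_total {R : Type*} [CommRing R] [Finite R]
    (hR : ∀ I J : Ideal R, I ≤ J ∨ J ≤ I) : SatisfiesR1' R := by
  intro r I a
  rcases isEmpty_or_nonempty (Fin r) with hr | hr
  · simp
  have hdir : Directed (· ≤ ·) I := fun i j =>
    (hR (I i) (I j)).elim (fun h => ⟨j, h, le_rfl⟩) (fun h => ⟨i, le_rfl, h⟩)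
  obtain ⟨j₀, hj₀⟩ := hdir.finite_le id
  have hunion : (⋃ j, (I j : Set R)) = I j₀ :=
    (iUnion_subset hj₀).antisymm (subset_iUnion (fun j => (I j : Set R)) j₀)
  calc (⋃ j, (I j : Set R)).ncard = ((a j₀ + ·) '' (I j₀ : Set R)).ncard := by
        rw [hunion, ncard_image_of_injective _ (add_right_injective _)]
    _ ≤ _ := ncard_le_ncard (subset_iUnion (fun j => (a j + ·) '' (I j : Set R)) j₀)

theorem Set.ncard_eq_sum_ncard_fiber {A B : Type*} [Finite A] [Fintype B] (S : Set (A × B)) :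
    S.ncard = ∑ y, {x | (x, y) ∈ S}.ncard := by
  let e : S ≃ Σ y, {x | (x, y) ∈ S} :=
    { toFun p := ⟨p.1.2, p.1.1, p.2⟩
      invFun q := ⟨(q.2.1, q.1), q.2.2⟩ }
  rw [← Nat.card_coe_set_eq, Nat.card_congr e, Nat.card_sigma]
  simp only [Nat.card_coe_set_eq]

theorem Set.ncard_iUnion_prod_le_left {ι A B : Type*} [Finite A] [Finite B]
    (P P' : ι → Set A) (Q : ι → Set B)
    (h : ∀ y, (⋃ j : {j // y ∈ Q j}, P j).ncard ≤ (⋃ j : {j // y ∈ Q j}, P' j).ncard) :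
    (⋃ j, P j ×ˢ Q j).ncard ≤ (⋃ j, P' j ×ˢ Q j).ncard := by
  have := Fintype.ofFinite B
  have hfiber : ∀ (F : ι → Set A) y,
      {x | (x, y) ∈ ⋃ j, F j ×ˢ Q j} = ⋃ j : {j // y ∈ Q j}, F j := fun F y => by
    ext x
    simp [and_comm]
  rw [ncard_eq_sum_ncard_fiber, ncard_eq_sum_ncard_fiber]
  exact Finset.sum_le_sum fun y _ => by rw [hfiber, hfiber]; exact h y

theorem Set.ncard_iUnion_prod_le_right {ι A B : Type*} [Finite A] [Finite B]
    (P : ι → Set A) (Q Q' : ι → Set B)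
    (h : ∀ x, (⋃ j : {j // x ∈ P j}, Q j).ncard ≤ (⋃ j : {j // x ∈ P j}, Q' j).ncard) :
    (⋃ j, P j ×ˢ Q j).ncard ≤ (⋃ j, P j ×ˢ Q' j).ncard := by
  have hswap : ∀ Q : ι → Set B, (⋃ j, P j ×ˢ Q j).ncard = (⋃ j, Q j ×ˢ P j).ncard := by
    intro Q
    rw [← ncard_image_of_injective _ Prod.swap_injective, image_iUnion]
    simp_rw [image_swap_prod]
  rw [hswap, hswap]
  exact ncard_iUnion_prod_le_left Q Q' P h

theorem SatisfiesR1'.prod {A B : Type*} [CommRing A] [CommRing B] [Finite A] [Finite B]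
    (hA : SatisfiesR1' A) (hB : SatisfiesR1' B) : SatisfiesR1' (A × B) := by
  intro r I a
  let K j := (I j).map (RingHom.fst A B)
  let L j := (I j).map (RingHom.snd A B)
  have hI : ∀ j, (I j : Set (A × B)) = (K j : Set A) ×ˢ (L j : Set B) := fun j =>
    (congrArg _ (Ideal.ideal_prod_eq (I j))).trans (Ideal.coe_prod _ _)
  have htrans : ∀ j, (a j + ·) '' ((K j : Set A) ×ˢ (L j : Set B)) =
      (((a j).1 + ·) '' (K j : Set A)) ×ˢ (((a j).2 + ·) '' (L j : Set B)) := fun j =>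
    prodMap_image_prod _ _ _ _
  simp only [hI, htrans]
  refine (ncard_iUnion_prod_le_right _ _ (fun j => ((a j).2 + ·) '' (L j : Set B))
    fun x => ?_).trans (ncard_iUnion_prod_le_left _ _ _ fun y => ?_)
  · exact hB.ncard_iUnion_le (fun j : {j // x ∈ (K j : Set A)} => L j) fun j => (a j).2
  · exact hA.ncard_iUnion_le (fun j : {j // y ∈ ((a j).2 + ·) '' (L j : Set B)} => K j)
      fun j => (a j).1

theorem satisfiesR1'_of_subsingleton {R : Type*} [CommRing R] [Subsingleton R] :
    SatisfiesR1' R := by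
  intro r I a
  have htrans : ∀ j, (a j + ·) '' (I j : Set R) = I j := fun j => by
    simp [Subsingleton.elim (a j) 0]
  simp only [htrans, le_rfl]

theorem SatisfiesR1'.pi {ι : Type u} [Finite ι] {R : ι → Type v} [∀ i, CommRing (R i)]
    [∀ i, Finite (R i)] (h : ∀ i, SatisfiesR1' (R i)) : SatisfiesR1' (∀ i, R i) := by
  have := Fintype.ofFinite ι
  refine Fintype.induction_empty_option (P := fun ι _ => ∀ (R : ι → Type v)
    [∀ i, CommRing (R i)] [∀ i, Finite (R i)], (∀ i, SatisfiesR1' (R i)) →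
      SatisfiesR1' (∀ i, R i)) ?_ ?_ ?_ ι R h
  · intro α β _ e ih R _ _ h
    have : Finite α := .of_equiv β e.symm
    let e' := RingEquiv.piCongrLeft R e
    exact (ih (fun a => R (e a)) fun a => h (e a)).of_surjective e'.toRingHom e'.surjective
  · intro R _ _ _
    exact satisfiesR1'_of_subsingleton
  · intro α _ ih R _ _ h
    let e' := (RingEquiv.piOptionEquivProd (R := R)).symm
    exact ((h none).prod (ih _ fun a => h (some a))).of_surjective e'.toRingHom e'.surjective

theorem not_satisfiesR1'_of_inf_eq_bot {R : Type*} [CommRing R] [Finite R] {A B C : Ideal R}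
    (hAB : A ⊓ B = ⊥) (hAC : A ⊓ C = ⊥) (hBC : B ⊓ C = ⊥) {x y : R}
    (hx : x ∈ A) (hy : y ∈ B) (hxy : x + y ∈ C) (hxy0 : x + y ≠ 0) : ¬ SatisfiesR1' R := by
  intro h
  -- `A ∪ B ∪ C` has `|A| + |B| + |C| - 2` points, but `A ∪ (x + B) ∪ C` at most one fewer,
  -- since `x ∈ A ∩ (x + B)` and `0, x + y ∈ (A ∪ (x + B)) ∩ C`.
  have hR1 := h 3 ![A, B, C] ![0, x, 0]
  have hfin3 : ∀ f : Fin 3 → Set R, (⋃ j, f j) = f 0 ∪ f 1 ∪ f 2 := fun f => by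
    simp [Set.ext_iff, Fin.exists_fin_succ, or_assoc]
  simp only [hfin3, Fin.isValue, Matrix.cons_val_zero, Matrix.cons_val_one, Matrix.cons_val_two,
    Matrix.head_cons, Matrix.tail_cons, zero_add, image_id'] at hR1
  have hinter : ∀ {I J : Ideal R}, I ⊓ J = ⊥ → (I : Set R) ∩ J = {0} := fun hIJ => by
    rw [← Submodule.coe_inf, hIJ, Submodule.bot_coe]
  have hlower₁ := ncard_union_add_ncard_inter (A : Set R) B
  have hlower₂ := ncard_union_add_ncard_inter ((A : Set R) ∪ B) C
  rw [hinter hAB, ncard_singleton] at hlower₁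
  rw [union_inter_distrib_right, hinter hAC, hinter hBC, union_self, ncard_singleton] at hlower₂
  set B' := (x + ·) '' (B : Set R)
  have hB' : B'.ncard = (B : Set R).ncard := ncard_image_of_injective _ (add_right_injective x)
  have hupper₁ := ncard_union_add_ncard_inter (A : Set R) B'
  have hupper₂ := ncard_union_add_ncard_inter ((A : Set R) ∪ B') C
  have hx' : 1 ≤ ((A : Set R) ∩ B').ncard :=
    (ncard_pos (toFinite _)).2 ⟨x, hx, 0, B.zero_mem, add_zero x⟩
  have hxy' : 2 ≤ (((A : Set R) ∪ B') ∩ C).ncard := by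
    rw [← ncard_pair hxy0.symm]
    refine ncard_le_ncard ?_
    rintro z (rfl | rfl)
    exacts [⟨Or.inl A.zero_mem, C.zero_mem⟩, ⟨Or.inr ⟨y, hy, rfl⟩, hxy⟩]
  omega

theorem not_satisfiesR1'_of_forall_mul_add_mul_eq_zero {R : Type*} [CommRing R] [Finite R]
    {x y : R} (hx : x ≠ 0) (hind : ∀ a b, a * x + b * y = 0 → a * x = 0 ∧ b * y = 0)
    (hann : ∀ a, a * x = 0 ↔ a * y = 0) : ¬ SatisfiesR1' R := by
  refine not_satisfiesR1'_of_inf_eq_bot (A := Ideal.span {x}) (B := Ideal.span {y})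
    (C := Ideal.span {x + y}) ?_ ?_ ?_ (Ideal.mem_span_singleton_self x)
    (Ideal.mem_span_singleton_self y) (Ideal.mem_span_singleton_self _) ?_
  · refine (Submodule.eq_bot_iff _).2 fun z ⟨hz₁, hz₂⟩ => ?_
    obtain ⟨a, rfl⟩ := Ideal.mem_span_singleton'.1 hz₁
    obtain ⟨b, hb⟩ := Ideal.mem_span_singleton'.1 hz₂
    exact (hind a (-b) (by linear_combination -hb)).1
  · refine (Submodule.eq_bot_iff _).2 fun z ⟨hz₁, hz₂⟩ => ?_
    obtain ⟨a, rfl⟩ := Ideal.mem_span_singleton'.1 hz₁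
    obtain ⟨c, hc⟩ := Ideal.mem_span_singleton'.1 hz₂
    obtain ⟨h₁, h₂⟩ := hind (a - c) (-c) (by linear_combination -hc)
    have h₃ : c * x = 0 := (hann c).2 (by linear_combination -h₂)
    linear_combination h₁ + h₃
  · refine (Submodule.eq_bot_iff _).2 fun z ⟨hz₁, hz₂⟩ => ?_
    obtain ⟨b, rfl⟩ := Ideal.mem_span_singleton'.1 hz₁
    obtain ⟨c, hc⟩ := Ideal.mem_span_singleton'.1 hz₂
    have h₁ : c * x = 0 := (hind c (c - b) (by linear_combination hc)).1
    linear_combination -hc + h₁ + (hann c).1 h₁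
  · intro hxy
    exact hx (by simpa using (hind 1 1 (by simpa using hxy)).1)

theorem IsLocalRing.mem_maximalIdeal_of_mul_add_mul_mem {S : Type*} [CommRing S] [IsLocalRing S]
    {x y a b : S} (hx : x ∉ Ideal.span {y})
    (h : a * x + b * y ∈ maximalIdeal S * Ideal.span {x} ⊔ maximalIdeal S * Ideal.span {y}) :
    a ∈ maximalIdeal S := by
  obtain ⟨_, hu, _, hv, huv⟩ := Submodule.mem_sup.1 h
  obtain ⟨s, hs, rfl⟩ := Ideal.mem_mul_span_singleton.1 hu
  obtain ⟨t, -, rfl⟩ := Ideal.mem_mul_span_singleton.1 hv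
  by_contra ha
  have hunit : IsUnit (a - s) := by
    rw [← IsLocalRing.notMem_maximalIdeal]
    exact fun has => ha (by simpa using add_mem has hs)
  refine hx ((Ideal.unit_mul_mem_iff_mem _ hunit).1 ?_)
  rw [show (a - s) * x = (t - b) * y by linear_combination -huv]
  exact Ideal.mul_mem_left _ _ (Ideal.mem_span_singleton_self y)

theorem IsLocalRing.mul_add_mul_mem_iff {S : Type*} [CommRing S] [IsLocalRing S]
    {x y : S} (hx : x ∉ Ideal.span {y}) (hy : y ∉ Ideal.span {x}) (a b : S) :
    a * x + b * y ∈ maximalIdeal S * Ideal.span {x} ⊔ maximalIdeal S * Ideal.span {y} ↔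
      a ∈ maximalIdeal S ∧ b ∈ maximalIdeal S := by
  refine ⟨fun h => ⟨mem_maximalIdeal_of_mul_add_mul_mem hx h, ?_⟩, fun ⟨ha, hb⟩ => ?_⟩
  · rw [add_comm, sup_comm] at h
    exact mem_maximalIdeal_of_mul_add_mul_mem hy h
  · exact add_mem (Ideal.mem_sup_left (Ideal.mul_mem_mul ha (Ideal.mem_span_singleton_self x)))
      (Ideal.mem_sup_right (Ideal.mul_mem_mul hb (Ideal.mem_span_singleton_self y)))

open IsLocalRing in
theorem SatisfiesR1'.le_total_of_isLocalRing {S : Type*} [CommRing S] [Finite S]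
    [IsLocalRing S] (h : SatisfiesR1' S) (I J : Ideal S) : I ≤ J ∨ J ≤ I := by
  by_contra! hIJ
  obtain ⟨x, hxI, hxJ⟩ := SetLike.not_le_iff_exists.1 hIJ.1
  obtain ⟨y, hyJ, hyI⟩ := SetLike.not_le_iff_exists.1 hIJ.2
  have hx : x ∉ Ideal.span {y} := fun hx => hxJ ((Ideal.span_singleton_le_iff_mem J).2 hyJ hx)
  have hy : y ∉ Ideal.span {x} := fun hy => hyI ((Ideal.span_singleton_le_iff_mem I).2 hxI hy)
  set N := maximalIdeal S * Ideal.span {x} ⊔ maximalIdeal S * Ideal.span {y}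
  have hmk : ∀ a b : S, Ideal.Quotient.mk N (a * x + b * y) = 0 ↔
      a ∈ maximalIdeal S ∧ b ∈ maximalIdeal S := fun a b => by
    rw [Ideal.Quotient.eq_zero_iff_mem, mul_add_mul_mem_iff hx hy]
  have hmk₁ : ∀ a : S, Ideal.Quotient.mk N (a * x) = 0 ↔ a ∈ maximalIdeal S := fun a => by
    simpa [zero_mem] using hmk a 0
  have hmk₂ : ∀ b : S, Ideal.Quotient.mk N (b * y) = 0 ↔ b ∈ maximalIdeal S := fun b => by
    simpa [zero_mem] using hmk 0 b
  have : Finite (S ⧸ N) := Finite.of_surjective _ Ideal.Quotient.mk_surjective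
  refine not_satisfiesR1'_of_forall_mul_add_mul_eq_zero (x := Ideal.Quotient.mk N x)
    (y := Ideal.Quotient.mk N y) ?_ ?_ ?_ (h.of_surjective _ Ideal.Quotient.mk_surjective)
  · simpa using (hmk₁ 1).not.2 (maximalIdeal.isMaximal S).isPrime.one_notMem
  · intro a b hab
    obtain ⟨a, rfl⟩ := Ideal.Quotient.mk_surjective a
    obtain ⟨b, rfl⟩ := Ideal.Quotient.mk_surjective b
    simp only [← map_mul, ← map_add, hmk, hmk₁, hmk₂] at hab ⊢
    exact hab
  · intro a
    obtain ⟨a, rfl⟩ := Ideal.Quotient.mk_surjective a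
    simp only [← map_mul, hmk₁, hmk₂]

/-- **Theorem 2 of the paper.** A finite commutative ring `R` satisfies
(R1') for every finite set of ideals iff `R` is isomorphic to a finite direct product of
local rings each of whose ideal lattice is totally ordered. -/
theorem rogers_finite_rings (R : Type u) [CommRing R] [Finite R] :
    SatisfiesR1' R ↔
      ∃ (k : ℕ) (Rs : Fin k → Type u) (_ : ∀ i, CommRing (Rs i)),
        Nonempty (R ≃+* ∀ i, Rs i) ∧
          ∀ i, IsLocalRing (Rs i) ∧ ∀ I J : Ideal (Rs i), I ≤ J ∨ J ≤ I := by
  constructor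
  · intro h
    obtain ⟨k, ⟨σ⟩⟩ := Finite.exists_equiv_fin (MaximalSpectrum R)
    let e : R ≃+* ∀ i : Fin k, Localization.AtPrime (σ.symm i).asIdeal :=
      (MaximalSpectrum.toPiLocalizationEquiv R).toRingEquiv.trans
        (RingEquiv.piCongrLeft _ σ.symm).symm
    refine ⟨k, _, _, ⟨e⟩, fun i => ⟨inferInstance, ?_⟩⟩
    have hsurj : Function.Surjective ((Pi.evalRingHom _ i).comp e.toRingHom) :=
      (Function.surjective_eval i).comp e.surjective
    have := Finite.of_surjective _ hsurj
    exact (h.of_surjective _ hsurj).le_total_of_isLocalRing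
  · rintro ⟨k, Rs, _, ⟨e⟩, hRs⟩
    have := Finite.of_equiv R e.toEquiv
    have := fun i => Finite.of_surjective _ (Function.surjective_eval (β := Rs) i)
    exact (SatisfiesR1'.pi fun i => satisfiesR1'_of_le_total (hRs i).2).of_surjective
      e.symm.toRingHom e.symm.surjective
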